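/- arXiv:2405.01252 — 2 statements merged into one kernel-verified Lean document; each statement's English description precedes it below -/
import Mathlib

section
/- Let d > 0 be a real number and let n : ℝ → ℝ be continuous and integrable. Set v := p_d ∗ n. Then v is differentiable and for every x ∈ ℝ the two representations hold: v'(x) = −(1/√d)·v(x) + (1/d)·e^{x/√d} ∫_x^{+∞} e^{−ξ/√d} n(ξ) dξ, and v'(x) = (1/√d)·v(x) − (1/d)·e^{−x/√d} ∫_{−∞}^x e^{ξ/√d} n(ξ) dξ. -/
/-!
Write `s = √d`. Splitting the convolution at `ξ = x` factors the kernel on each half-line: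
`v x = (1/(2s)) (e^{-x/s} A x + e^{x/s} B x)` with `A x = ∫_{ξ<x} e^{ξ/s} n ξ` and
`B x = ∫_{ξ>x} e^{-ξ/s} n ξ`. Both tails are differentiable by the fundamental theorem of calculus,
and in the product rule the two boundary terms `± n x` cancel, leaving
`v' x = (1/(2d)) (e^{x/s} B x - e^{-x/s} A x)`. Each representation follows by eliminating `A x` or
`B x` with the formula for `v x`.
-/

/-- The kernel `p_d(x) = (1/(2√d)) exp(-|x|/√d)`. -/
noncomputable def pd (d : ℝ) (x : ℝ) : ℝ :=
  1 / (2 * Real.sqrt d) * Real.exp (-|x| / Real.sqrt d)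

open MeasureTheory Set Real

section TailIntegrals

variable {E : Type*} [NormedAddCommGroup E] [NormedSpace ℝ E] [CompleteSpace E] {f : ℝ → E}

theorem hasDerivAt_integral_Iio (hf : Continuous f) (hfi : ∀ a, IntegrableOn f (Iio a)) (x : ℝ) :
    HasDerivAt (fun u => ∫ t in Iio u, f t) (f x) x := by
  have h : (fun u => ∫ t in Iio u, f t) = fun u => (∫ t in Iio 0, f t) + ∫ t in (0)..u, f t := by
    funext u
    rw [← intervalIntegral.integral_Iio_sub_Iio' (hfi u) (hfi 0), add_sub_cancel]
  rw [h]
  exact (intervalIntegral.integral_hasDerivAt_right (hf.intervalIntegrable 0 x)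
    (hf.stronglyMeasurableAtFilter _ _) hf.continuousAt).const_add _

theorem hasDerivAt_integral_Ioi (hf : Continuous f) (hfi : ∀ a, IntegrableOn f (Ioi a)) (x : ℝ) :
    HasDerivAt (fun u => ∫ t in Ioi u, f t) (-f x) x := by
  have h : (fun u => ∫ t in Ioi u, f t) = fun u => (∫ t in Ioi 0, f t) - ∫ t in (0)..u, f t := by
    funext u
    rw [← intervalIntegral.integral_Ioi_sub_Ioi' (hfi 0) (hfi u), sub_sub_cancel]
  rw [h]
  exact (intervalIntegral.integral_hasDerivAt_right (hf.intervalIntegrable 0 x)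
    (hf.stronglyMeasurableAtFilter _ _) hf.continuousAt).const_sub _

end TailIntegrals

section ExponentialWeights

variable {s : ℝ} {n : ℝ → ℝ}

theorem integrableOn_exp_div_mul_Iio (hs : 0 ≤ s) (hn : Integrable n) (a : ℝ) :
    IntegrableOn (fun ξ => exp (ξ / s) * n ξ) (Iio a) := by
  refine hn.integrableOn.bdd_mul (c := exp (a / s)) (by fun_prop) ?_
  refine ae_restrict_of_forall_mem measurableSet_Iio fun ξ hξ => ?_
  rw [norm_of_nonneg (exp_pos _).le]
  exact exp_le_exp.2 (div_le_div_of_nonneg_right (le_of_lt hξ) hs)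

theorem integrableOn_exp_neg_div_mul_Ioi (hs : 0 ≤ s) (hn : Integrable n) (a : ℝ) :
    IntegrableOn (fun ξ => exp (-ξ / s) * n ξ) (Ioi a) := by
  refine hn.integrableOn.bdd_mul (c := exp (-a / s)) (by fun_prop) ?_
  refine ae_restrict_of_forall_mem measurableSet_Ioi fun ξ hξ => ?_
  rw [norm_of_nonneg (exp_pos _).le]
  exact exp_le_exp.2 (div_le_div_of_nonneg_right (neg_le_neg (le_of_lt hξ)) hs)

end ExponentialWeights

section Kernel

variable {d x ξ : ℝ} {n : ℝ → ℝ}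

theorem pd_sub_of_le (h : ξ ≤ x) :
    pd d (x - ξ) = 1 / (2 * √d) * exp (-x / √d) * exp (ξ / √d) := by
  rw [pd, abs_of_nonneg (sub_nonneg.2 h), mul_assoc, ← exp_add]
  ring_nf

theorem pd_sub_of_ge (h : x ≤ ξ) :
    pd d (x - ξ) = 1 / (2 * √d) * exp (x / √d) * exp (-ξ / √d) := by
  rw [pd, abs_of_nonpos (sub_nonpos.2 h), mul_assoc, ← exp_add]
  ring_nf

theorem norm_pd_le (y : ℝ) : ‖pd d y‖ ≤ 1 / (2 * √d) := by
  have hexp : exp (-|y| / √d) ≤ 1 :=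
    exp_le_one_iff.2 (div_nonpos_of_nonpos_of_nonneg (neg_nonpos.2 (abs_nonneg y)) (sqrt_nonneg d))
  rw [pd, norm_mul, norm_of_nonneg (by positivity), norm_of_nonneg (exp_pos _).le]
  exact mul_le_of_le_one_right (by positivity) hexp

theorem integrable_pd_sub_mul (hn : Integrable n) (x : ℝ) :
    Integrable (fun ξ => pd d (x - ξ) * n ξ) :=
  hn.bdd_mul (by unfold pd; fun_prop) (ae_of_all _ fun ξ => norm_pd_le (x - ξ))

theorem integral_pd_sub_mul (hn : Integrable n) (x : ℝ) :
    ∫ ξ, pd d (x - ξ) * n ξ = 1 / (2 * √d) *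
      (exp (-x / √d) * (∫ ξ in Iio x, exp (ξ / √d) * n ξ)
        + exp (x / √d) * ∫ ξ in Ioi x, exp (-ξ / √d) * n ξ) := by
  have hint := integrable_pd_sub_mul (d := d) hn x
  have hleft : ∫ ξ in Iic x, pd d (x - ξ) * n ξ
      = 1 / (2 * √d) * exp (-x / √d) * ∫ ξ in Iio x, exp (ξ / √d) * n ξ := by
    rw [← integral_Iic_eq_integral_Iio, ← integral_const_mul]
    exact setIntegral_congr_fun measurableSet_Iic fun ξ hξ => by
      rw [pd_sub_of_le hξ, mul_assoc]
  have hright : ∫ ξ in Ioi x, pd d (x - ξ) * n ξ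
      = 1 / (2 * √d) * exp (x / √d) * ∫ ξ in Ioi x, exp (-ξ / √d) * n ξ := by
    rw [← integral_const_mul]
    exact setIntegral_congr_fun measurableSet_Ioi fun ξ hξ => by
      rw [pd_sub_of_ge (le_of_lt hξ), mul_assoc]
  rw [← intervalIntegral.integral_Iic_add_Ioi hint.integrableOn hint.integrableOn, hleft, hright]
  ring

theorem hasDerivAt_integral_pd_sub_mul (hd : 0 < d) (hc : Continuous n) (hn : Integrable n)
    (x : ℝ) :
    HasDerivAt (fun x => ∫ ξ, pd d (x - ξ) * n ξ) (1 / (2 * d) *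
      (exp (x / √d) * (∫ ξ in Ioi x, exp (-ξ / √d) * n ξ)
        - exp (-x / √d) * ∫ ξ in Iio x, exp (ξ / √d) * n ξ)) x := by
  have hs : 0 < √d := sqrt_pos.2 hd
  have hA := hasDerivAt_integral_Iio (by fun_prop) (integrableOn_exp_div_mul_Iio hs.le hn) x
  have hB := hasDerivAt_integral_Ioi (by fun_prop) (integrableOn_exp_neg_div_mul_Ioi hs.le hn) x
  have hminus : HasDerivAt (fun x => exp (-x / √d)) (exp (-x / √d) * (-1 / √d)) x :=
    ((hasDerivAt_id x).neg.div_const _).exp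
  have hplus : HasDerivAt (fun x => exp (x / √d)) (exp (x / √d) * (1 / √d)) x :=
    ((hasDerivAt_id x).div_const _).exp
  rw [funext fun x => integral_pd_sub_mul (d := d) hn x]
  refine (((hminus.fun_mul hA).fun_add (hplus.fun_mul hB)).const_mul _).congr_deriv ?_
  have hsq := sq_sqrt hd.le
  set s := √d
  rw [← hsq]
  field_simp
  ring

end Kernel

/-- **Two one-sided representations of the derivative of `v = p_d ∗ n`.** -/
theorem deriv_convolution_one_sided (d : ℝ) (hd : 0 < d) (n : ℝ → ℝ)
    (hc : Continuous n) (hi : MeasureTheory.Integrable n)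
    (v : ℝ → ℝ) (hv : v = fun x => ∫ ξ : ℝ, pd d (x - ξ) * n ξ) :
    Differentiable ℝ v ∧
    ∀ x : ℝ,
      deriv v x
        = -(1 / Real.sqrt d) * v x
          + (1 / d) * Real.exp (x / Real.sqrt d)
            * ∫ ξ in Set.Ioi x, Real.exp (-ξ / Real.sqrt d) * n ξ
      ∧ deriv v x
        = (1 / Real.sqrt d) * v x
          - (1 / d) * Real.exp (-x / Real.sqrt d)
            * ∫ ξ in Set.Iio x, Real.exp (ξ / Real.sqrt d) * n ξ := by
  subst hv
  have hderiv := hasDerivAt_integral_pd_sub_mul hd hc hi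
  refine ⟨fun x => (hderiv x).differentiableAt, fun x => ?_⟩
  beta_reduce
  rw [(hderiv x).deriv, integral_pd_sub_mul hi x]
  have hs : √d ≠ 0 := (sqrt_pos.2 hd).ne'
  have hsq := sq_sqrt hd.le
  set s := √d
  rw [← hsq]
  constructor <;> field_simp <;> ring
end

section
/- Let d ≥ 1 be a real number and x₀ ∈ ℝ. There is no function v : [0,∞) × ℝ → ℝ with the following properties: (a) v, ∂_x v, ∂_x² v, ∂_t v, ∂_t∂_x v exist and are continuous on [0,∞) × ℝ, with ∂_t∂_x v = ∂_x∂_t v; (b) for each t ≥ 0 the functions v(t,·) and (∂_x v)(t,·) are square-integrable on ℝ, v(t,ξ) → 0 as ξ → +∞ and as ξ → −∞, and ∫_ℝ( v(t,ξ)² + d·(∂_x v)(t,ξ)² )dξ ≤ ∫_ℝ( v(0,ξ)² + d·(∂_x v)(0,ξ)² )dξ; (c) setting P(t,x) = ∫_ℝ p_d(x − ξ)·( d·v(t,ξ)² + (d²/2)·(∂_x v)(t,ξ)² ) dξ, the equation ∂_t v + d·v·∂_x v = −∂_x P holds at every point of [0,∞) × ℝ; (d) there exists a differentiable q : [0,∞)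 → ℝ with q(0) = x₀ and q'(t) = d·v(t, q(t)) for all t ≥ 0; (e) (∂_x v)(0, x₀) < −(1/√d)·|v(0, x₀)|. -/
open MeasureTheory Set Filter Topology Real

noncomputable def expConvLeft (r : ℝ) (f : ℝ → ℝ) (x : ℝ) : ℝ :=
  ∫ ξ in Iic x, exp ((ξ - x) / r) * f ξ

theorem hasDerivAt_integral_Iic {g : ℝ → ℝ} (hg : Continuous g)
    (hgi : ∀ a, IntegrableOn g (Iic a)) (x : ℝ) :
    HasDerivAt (fun y => ∫ ξ in Iic y, g ξ) (g x) x := by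
  have h : (fun y => ∫ ξ in Iic y, g ξ) = fun y => (∫ ξ in Iic x, g ξ) + ∫ ξ in x..y, g ξ := by
    ext y
    rw [← intervalIntegral.integral_Iic_sub_Iic (hgi x) (hgi y)]
    ring
  rw [h]
  exact (intervalIntegral.integral_hasDerivAt_right (hg.intervalIntegrable _ _)
    (hg.stronglyMeasurableAtFilter _ _) hg.continuousAt).const_add _

section ExpConvLeft

variable {r : ℝ} {f : ℝ → ℝ}

theorem integrableOn_exp_sub_div_mul_Iic (hr : 0 < r) (hf : Integrable f) (x : ℝ) :
    IntegrableOn (fun ξ => exp ((ξ - x) / r) * f ξ) (Iic x) := by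
  refine hf.integrableOn.bdd_mul (c := 1)
    (by fun_prop : Continuous fun ξ => exp ((ξ - x) / r)).aestronglyMeasurable ?_
  filter_upwards [ae_restrict_mem measurableSet_Iic] with ξ hξ
  rw [Real.norm_eq_abs, abs_of_pos (exp_pos _), exp_le_one_iff]
  exact div_nonpos_of_nonpos_of_nonneg (sub_nonpos.2 hξ) hr.le

theorem hasDerivAt_expConvLeft (hr : 0 < r) (hf : Integrable f) (hfc : Continuous f) (x : ℝ) :
    HasDerivAt (expConvLeft r f) (f x - expConvLeft r f x / r) x := by
  have hfac : expConvLeft r f = fun y => exp (-y / r) * ∫ ξ in Iic y, exp (ξ / r) * f ξ := by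
    ext y
    rw [expConvLeft, ← integral_const_mul]
    congr 1 with ξ
    rw [← mul_assoc, ← exp_add]
    ring_nf
  have hint : ∀ a, IntegrableOn (fun ξ => exp (ξ / r) * f ξ) (Iic a) := fun a =>
    IntegrableOn.congr_fun ((integrableOn_exp_sub_div_mul_Iic hr hf a).const_mul (exp (a / r)))
      (fun ξ _ => by rw [← mul_assoc, ← exp_add]; ring_nf) measurableSet_Iic
  rw [hfac]
  refine (((hasDerivAt_neg x).div_const r).exp.mul
    (hasDerivAt_integral_Iic (by fun_prop) hint x)).congr_deriv ?_
  rw [← mul_assoc, ← exp_add, show -x / r + x / r = 0 by ring, exp_zero]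
  ring

theorem mul_sq_le_expConvLeft {w w₁ : ℝ → ℝ} (hr : 0 < r) (hw : ∀ x, HasDerivAt w (w₁ x) x)
    (hw₁ : Continuous w₁) (hf : Integrable f)
    (hfw : ∀ ξ, r ^ 2 * w ξ ^ 2 + (r ^ 2) ^ 2 / 2 * w₁ ξ ^ 2 ≤ f ξ)
    (hbot : Tendsto w atBot (𝓝 0)) (x : ℝ) :
    r ^ 3 / 2 * w x ^ 2 ≤ expConvLeft r f x := by
  have hwc : Continuous w := continuous_iff_continuousAt.2 fun ξ => (hw ξ).continuousAt
  set E : ℝ → ℝ := fun ξ => exp ((ξ - x) / r)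
  set g : ℝ → ℝ := fun ξ => r ^ 3 / 2 * (E ξ * w ξ ^ 2)
  set g' : ℝ → ℝ := fun ξ => E ξ * (r ^ 2 / 2 * w ξ ^ 2 + r ^ 3 * (w ξ * w₁ ξ))
  have hE : ∀ ξ, HasDerivAt E (E ξ / r) ξ := fun ξ =>
    (((hasDerivAt_id' ξ).sub_const x).div_const r).exp.congr_deriv (by ring)
  have hg : ∀ ξ, HasDerivAt g (g' ξ) ξ := fun ξ =>
    (((hE ξ).mul ((hw ξ).pow 2)).const_mul (r ^ 3 / 2)).congr_deriv (by
      simp only [g', Nat.cast_ofNat, Pi.pow_apply]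
      field_simp
      ring)
  -- `E f - g' ≥ E (r²/2) (w - r w₁)²`
  have hg'_le : ∀ ξ, g' ξ ≤ E ξ * f ξ := fun ξ => by
    refine mul_le_mul_of_nonneg_left ((le_trans ?_ (hfw ξ))) (exp_pos _).le
    nlinarith [mul_nonneg (sq_nonneg r) (sq_nonneg (w ξ - r * w₁ ξ))]
  have hg'_abs : ∀ ξ, ‖g' ξ‖ ≤ 2 * (E ξ * f ξ) := fun ξ => by
    have hEpos : 0 < E ξ := exp_pos _
    rw [Real.norm_eq_abs, abs_mul, abs_of_pos hEpos]
    have hdens : |r ^ 2 / 2 * w ξ ^ 2 + r ^ 3 * (w ξ * w₁ ξ)| ≤ 2 * f ξ := by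
      rw [abs_le]
      constructor <;> nlinarith [hfw ξ, sq_nonneg (w ξ), mul_nonneg (sq_nonneg r)
        (sq_nonneg (w ξ - r * w₁ ξ)), mul_nonneg (sq_nonneg r) (sq_nonneg (w ξ + r * w₁ ξ))]
    nlinarith
  have hg'int : IntegrableOn g' (Iic x) :=
    ((integrableOn_exp_sub_div_mul_Iic hr hf x).const_mul 2).mono'
      (by fun_prop : Continuous g').aestronglyMeasurable.restrict
      (Eventually.of_forall hg'_abs)
  have hlim : Tendsto g atBot (𝓝 0) := by
    have hE0 : Tendsto E atBot (𝓝 0) :=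
      tendsto_exp_atBot.comp (by simpa only [sub_eq_add_neg, id] using
        (tendsto_atBot_add_const_right _ (-x) tendsto_id).atBot_div_const hr)
    simpa using ((hE0.mul (hbot.pow 2)).const_mul (r ^ 3 / 2))
  calc r ^ 3 / 2 * w x ^ 2 = ∫ ξ in Iic x, g' ξ := by
        rw [integral_Iic_of_hasDerivAt_of_tendsto' (fun ξ _ => hg ξ) hg'int hlim]
        simp [g, E]
    _ ≤ expConvLeft r f x :=
        setIntegral_mono_on hg'int (integrableOn_exp_sub_div_mul_Iic hr hf x) measurableSet_Iic
          fun ξ _ => hg'_le ξ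

theorem hasDerivAt_expConvLeft_comp_neg (hr : 0 < r) (hf : Integrable f) (hfc : Continuous f)
    (x : ℝ) :
    HasDerivAt (fun y => expConvLeft r (fun ξ => f (-ξ)) (-y))
      (expConvLeft r (fun ξ => f (-ξ)) (-x) / r - f x) x :=
  ((hasDerivAt_expConvLeft hr hf.comp_neg (hfc.comp continuous_neg) (-x)).comp x
    (hasDerivAt_neg x)).congr_deriv (by simp only [neg_neg]; ring)

theorem mul_sq_le_expConvLeft_comp_neg {w w₁ : ℝ → ℝ} (hr : 0 < r)
    (hw : ∀ x, HasDerivAt w (w₁ x) x) (hw₁ : Continuous w₁) (hf : Integrable f)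
    (hfw : ∀ ξ, r ^ 2 * w ξ ^ 2 + (r ^ 2) ^ 2 / 2 * w₁ ξ ^ 2 ≤ f ξ)
    (htop : Tendsto w atTop (𝓝 0)) (x : ℝ) :
    r ^ 3 / 2 * w x ^ 2 ≤ expConvLeft r (fun ξ => f (-ξ)) (-x) := by
  simpa using mul_sq_le_expConvLeft (w := fun ξ => w (-ξ)) (w₁ := fun ξ => -w₁ (-ξ)) hr
    (fun ξ => ((hw (-ξ)).comp ξ (hasDerivAt_neg ξ)).congr_deriv (mul_neg_one _))
    (by fun_prop) hf.comp_neg (fun ξ => by simpa using hfw (-ξ))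
    (htop.comp tendsto_neg_atBot_atTop) (-x)

theorem integral_pd_sq_mul_eq_expConvLeft (hr : 0 < r) (hf : Integrable f) (x : ℝ) :
    ∫ ξ, pd (r ^ 2) (x - ξ) * f ξ
      = (expConvLeft r f x + expConvLeft r (fun ξ => f (-ξ)) (-x)) / (2 * r) := by
  have hpd : ∀ y, pd (r ^ 2) y = exp (-|y| / r) / (2 * r) := fun y => by
    rw [pd, sqrt_sq hr.le]
    ring
  have hint : Integrable fun ξ => pd (r ^ 2) (x - ξ) * f ξ := by
    refine hf.bdd_mul (c := 1 / (2 * r)) (by simp only [hpd]; fun_prop) (ae_of_all _ fun ξ => ?_)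
    rw [hpd, Real.norm_eq_abs, abs_of_pos (by positivity), div_le_div_iff_of_pos_right
      (by positivity), exp_le_one_iff, neg_div, neg_nonpos]
    positivity
  rw [← intervalIntegral.integral_Iic_add_Ioi hint.integrableOn hint.integrableOn, add_div]
  congr 1
  · rw [expConvLeft, ← integral_div]
    refine setIntegral_congr_fun measurableSet_Iic fun ξ hξ => ?_
    rw [hpd, abs_of_nonneg (sub_nonneg.2 hξ)]
    ring_nf
  · rw [expConvLeft, ← integral_comp_neg_Ioi, ← integral_div]
    refine setIntegral_congr_fun measurableSet_Ioi fun ξ hξ => ?_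
    rw [hpd, abs_of_neg (sub_neg.2 hξ), neg_neg]
    ring_nf

theorem exists_pd_conv_potential {w w₁ : ℝ → ℝ} (hr : 0 < r) (hw : ∀ x, HasDerivAt w (w₁ x) x)
    (hw₁ : Continuous w₁) (hw2 : Integrable fun ξ => w ξ ^ 2)
    (hw₁2 : Integrable fun ξ => w₁ ξ ^ 2) (htop : Tendsto w atTop (𝓝 0))
    (hbot : Tendsto w atBot (𝓝 0)) :
    ∃ P Q : ℝ → ℝ,
      (fun x => ∫ ξ, pd (r ^ 2) (x - ξ) * (r ^ 2 * w ξ ^ 2 + (r ^ 2) ^ 2 / 2 * w₁ ξ ^ 2)) = P ∧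
      (∀ x, HasDerivAt P (Q x) x) ∧
      (∀ x, HasDerivAt Q ((P x - (r ^ 2 * w x ^ 2 + (r ^ 2) ^ 2 / 2 * w₁ x ^ 2)) / r ^ 2) x) ∧
      (∀ x, r ^ 2 / 2 * w x ^ 2 ≤ P x - r * Q x) ∧
      (∀ x, r ^ 2 / 2 * w x ^ 2 ≤ P x + r * Q x) := by
  have hwc : Continuous w := continuous_iff_continuousAt.2 fun ξ => (hw ξ).continuousAt
  set f : ℝ → ℝ := fun ξ => r ^ 2 * w ξ ^ 2 + (r ^ 2) ^ 2 / 2 * w₁ ξ ^ 2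
  have hf : Integrable f := (hw2.const_mul _).add (hw₁2.const_mul _)
  have hfc : Continuous f := by fun_prop
  set L := expConvLeft r f
  set R := fun x => expConvLeft r (fun ξ => f (-ξ)) (-x)
  have hL := hasDerivAt_expConvLeft hr hf hfc
  have hR : ∀ x, HasDerivAt R (R x / r - f x) x := hasDerivAt_expConvLeft_comp_neg hr hf hfc
  have hLge : ∀ x, r ^ 3 / 2 * w x ^ 2 ≤ L x :=
    mul_sq_le_expConvLeft hr hw hw₁ hf (fun _ => le_rfl) hbot
  have hRge : ∀ x, r ^ 3 / 2 * w x ^ 2 ≤ R x :=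
    mul_sq_le_expConvLeft_comp_neg hr hw hw₁ hf (fun _ => le_rfl) htop
  refine ⟨fun x => (L x + R x) / (2 * r), fun x => (R x - L x) / (2 * r ^ 2),
    funext (integral_pd_sq_mul_eq_expConvLeft hr hf), fun x => ?_, fun x => ?_, fun x => ?_,
    fun x => ?_⟩
  · refine (((hL x).add (hR x)).div_const (2 * r)).congr_deriv ?_
    field_simp
    ring
  · refine (((hR x).sub (hL x)).div_const (2 * r ^ 2)).congr_deriv ?_
    field_simp
    ring
  · calc r ^ 2 / 2 * w x ^ 2 ≤ L x / r := by
          rw [le_div_iff₀ hr]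
          linarith [hLge x]
      _ = _ := by
          field_simp
          ring
  · calc r ^ 2 / 2 * w x ^ 2 ≤ R x / r := by
          rw [le_div_iff₀ hr]
          linarith [hRge x]
      _ = _ := by
          field_simp
          ring

end ExpConvLeft

theorem hasDerivWithinAt_comp_curve {f f₁ : ℝ → ℝ → ℝ} {q : ℝ → ℝ}
    {D : Set ℝ} {t m : ℝ} (hD : Convex ℝ D) (ht : t ∈ D)
    (hf : ∀ s ∈ D, ∀ x, HasDerivWithinAt (fun s => f s x) (f₁ s x) D s)
    (hf₁ : ContinuousWithinAt (fun p : ℝ × ℝ => f₁ p.1 p.2) (D ×ˢ univ) (t, q t))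
    (hq : ContinuousAt q t) (hx : HasDerivAt (fun s => f t (q s)) m t) :
    HasDerivWithinAt (fun s => f s (q s)) (f₁ t (q t) + m) D t := by
  rw [hasDerivWithinAt_iff_isLittleO]
  -- split `f s (q s) - f t (q t)` at `f t (q s)`: a time increment, uniformly controlled by the
  -- continuity of `f₁`, and a space increment along `q`
  have htime : (fun s => f s (q s) - f t (q s) - (s - t) * f₁ t (q t)) =o[𝓝[D] t]
      fun s => s - t := by
    refine Asymptotics.isLittleO_iff.2 fun ε hε => ?_
    obtain ⟨δ, hδ, hclose⟩ := Metric.continuousWithinAt_iff.1 hf₁ ε hε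
    filter_upwards [self_mem_nhdsWithin, nhdsWithin_le_nhds (Metric.ball_mem_nhds t hδ),
      nhdsWithin_le_nhds (hq.eventually (Metric.ball_mem_nhds (q t) hδ))] with s hs hst hqs
    have hsub : uIcc t s ⊆ D := hD.ordConnected.uIcc_subset ht hs
    have hbound := (convex_uIcc t s).norm_image_sub_le_of_norm_hasDerivWithin_le
      (f := fun c => f c (q s) - c * f₁ t (q t)) (C := ε)
      (fun c hc => ((hf c (hsub hc) (q s)).mono hsub).sub
        ((hasDerivWithinAt_id c _).mul_const (f₁ t (q t)))) ?_
      left_mem_uIcc right_mem_uIcc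
    · rwa [show f s (q s) - f t (q s) - (s - t) * f₁ t (q t)
        = f s (q s) - s * f₁ t (q t) - (f t (q s) - t * f₁ t (q t)) by ring]
    · intro c hc
      have hct : dist c t < δ := (abs_sub_left_of_mem_uIcc hc).trans_lt hst
      rw [one_mul, ← dist_eq_norm]
      exact (hclose (x := (c, q s)) ⟨hsub hc, mem_univ _⟩
        (by rw [Prod.dist_eq]; exact max_lt hct hqs)).le
  have hspace := hasDerivWithinAt_iff_isLittleO.1 (hx.hasDerivWithinAt (s := D))
  refine (htime.add hspace).congr_left fun s => ?_
  simp only [smul_eq_mul]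
  ring

theorem riemann_invariants_riccati {u y : ℝ → ℝ} {s : Set ℝ} {r t P Q : ℝ} (hr : 0 < r)
    (hu : HasDerivWithinAt u (-Q) s t)
    (hy : HasDerivWithinAt y (u t ^ 2 - r ^ 2 / 2 * y t ^ 2 - P / r ^ 2) s t)
    (hm : r ^ 2 / 2 * u t ^ 2 ≤ P - r * Q) (hp : r ^ 2 / 2 * u t ^ 2 ≤ P + r * Q) :
    (∃ a, HasDerivWithinAt (fun s => u s + r * y s) a s t ∧
      a ≤ r / 2 * ((u t + r * y t) * (u t - r * y t))) ∧
    (∃ b, HasDerivWithinAt (fun s => u s - r * y s) b s t ∧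
      -(r / 2 * ((u t + r * y t) * (u t - r * y t))) ≤ b) := by
  refine ⟨⟨_, hu.add (hy.const_mul r), ?_⟩, ⟨_, hu.sub (hy.const_mul r), ?_⟩⟩
  · have h : -Q + r * (u t ^ 2 - r ^ 2 / 2 * y t ^ 2 - P / r ^ 2) = r / 2 * ((u t + r * y t) *
        (u t - r * y t)) - (P + r * Q - r ^ 2 / 2 * u t ^ 2) / r := by
      field_simp
      ring
    rw [h, sub_le_self_iff]
    exact div_nonneg (by linarith) hr.le
  · have h : -Q - r * (u t ^ 2 - r ^ 2 / 2 * y t ^ 2 - P / r ^ 2) = -(r / 2 * ((u t + r * y t) *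
        (u t - r * y t))) + (P - r * Q - r ^ 2 / 2 * u t ^ 2) / r := by
      field_simp
      ring
    rw [h, le_add_iff_nonneg_right]
    exact div_nonneg (by linarith) hr.le

theorem hasDerivWithinAt_along_characteristic {v : ℝ → ℝ → ℝ} {q P Q : ℝ → ℝ} {r t : ℝ}
    (hr : 0 < r) (ht : 0 ≤ t)
    (hvt : ∀ s, 0 ≤ s → ∀ x, DifferentiableAt ℝ (fun s => v s x) s)
    (hvtx : ∀ s, 0 ≤ s → ∀ x, DifferentiableAt ℝ (fun s => deriv (v s) x) s)
    (hvx : DifferentiableAt ℝ (v t) (q t)) (hvxx : DifferentiableAt ℝ (deriv (v t)) (q t))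
    (hcvt : ContinuousOn (fun p : ℝ × ℝ => deriv (fun s => v s p.2) p.1) (Ici 0 ×ˢ univ))
    (hcvtx : ContinuousOn (fun p : ℝ × ℝ => deriv (fun s => deriv (v s) p.2) p.1)
      (Ici 0 ×ˢ univ))
    (hmix : deriv (fun s => deriv (v s) (q t)) t
      = deriv (fun y => deriv (fun s => v s y) t) (q t))
    (hP : ∀ x, HasDerivAt P (Q x) x)
    (hQ : HasDerivAt Q ((P (q t) - (r ^ 2 * v t (q t) ^ 2
      + (r ^ 2) ^ 2 / 2 * deriv (v t) (q t) ^ 2)) / r ^ 2) (q t))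
    (heq : ∀ x, deriv (fun s => v s x) t + r ^ 2 * v t x * deriv (v t) x = -deriv P x)
    (hq : HasDerivAt q (r ^ 2 * v t (q t)) t) :
    HasDerivWithinAt (fun s => v s (q s)) (-Q (q t)) (Ici 0) t ∧
    HasDerivWithinAt (fun s => deriv (v s) (q s))
      (v t (q t) ^ 2 - r ^ 2 / 2 * deriv (v t) (q t) ^ 2 - P (q t) / r ^ 2) (Ici 0) t := by
  have hvt_eq : (fun x => deriv (fun s => v s x) t)
      = fun x => -Q x - r ^ 2 * v t x * deriv (v t) x := funext fun x => by
    rw [← (hP x).deriv]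
    linarith [heq x]
  constructor
  · refine (hasDerivWithinAt_comp_curve (f := v) (convex_Ici 0) ht
      (fun s hs x => (hvt s hs x).hasDerivAt.hasDerivWithinAt) (hcvt _ ⟨ht, mem_univ _⟩)
      hq.continuousAt (hvx.hasDerivAt.comp t hq)).congr_deriv ?_
    rw [congrFun hvt_eq]
    ring
  · have hvtx_eq : deriv (fun s => deriv (v s) (q t)) t = -((P (q t) - (r ^ 2 * v t (q t) ^ 2
        + (r ^ 2) ^ 2 / 2 * deriv (v t) (q t) ^ 2)) / r ^ 2)
        - (r ^ 2 * deriv (v t) (q t) * deriv (v t) (q t)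
          + r ^ 2 * v t (q t) * deriv (deriv (v t)) (q t)) := by
      rw [hmix, hvt_eq]
      exact (hQ.neg.sub ((hvx.hasDerivAt.const_mul (r ^ 2)).mul hvxx.hasDerivAt)).deriv
    refine (hasDerivWithinAt_comp_curve
      (f := fun s x => deriv (v s) x) (convex_Ici 0) ht
      (fun s hs x => (hvtx s hs x).hasDerivAt.hasDerivWithinAt) (hcvtx _ ⟨ht, mem_univ _⟩)
      hq.continuousAt (hvxx.hasDerivAt.comp t hq)).congr_deriv ?_
    rw [hvtx_eq]
    field_simp
    ring

theorem quadrant_forward_invariant {α β α' β' : ℝ → ℝ}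
    (hα : ∀ t, 0 ≤ t → HasDerivWithinAt α (α' t) (Ici 0) t)
    (hβ : ∀ t, 0 ≤ t → HasDerivWithinAt β (β' t) (Ici 0) t)
    (hα' : ∀ t, 0 ≤ t → α t < 0 → 0 < β t → α' t ≤ 0)
    (hβ' : ∀ t, 0 ≤ t → α t < 0 → 0 < β t → 0 ≤ β' t)
    (hα0 : α 0 < 0) (hβ0 : 0 < β 0) {t : ℝ} (ht : 0 ≤ t) :
    α t ≤ α 0 ∧ β 0 ≤ β t := by
  have hαc : ContinuousOn α (Ici 0) := fun t ht => (hα t ht).continuousWithinAt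
  have hβc : ContinuousOn β (Ici 0) := fun t ht => (hβ t ht).continuousWithinAt
  let s := {t | α t ≤ α 0 ∧ β 0 ≤ β t}
  suffices Icc 0 t ⊆ s from this ⟨ht, le_rfl⟩
  refine IsClosed.Icc_subset_of_forall_mem_nhdsWithin ?_ ⟨le_rfl, le_rfl⟩ ?_
  · have hc : ContinuousOn (fun t => (α t, β t)) (Icc 0 t) :=
      (hαc.prodMk hβc).mono Icc_subset_Ici_self
    rw [inter_comm]
    exact hc.preimage_isClosed_of_isClosed isClosed_Icc
      ((isClosed_le continuous_fst continuous_const).inter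
        (isClosed_le continuous_const continuous_snd))
  · rintro x ⟨⟨hαx, hβx⟩, hx0, -⟩
    have hsub : Ici x ⊆ Ici 0 := Ici_subset_Ici.2 hx0
    have hgood : ∀ᶠ y in 𝓝[≥] x, α y < 0 ∧ 0 < β y :=
      (((hαc x hx0).mono hsub).eventually_lt_const (hαx.trans_lt hα0)).and
        (((hβc x hx0).mono hsub).eventually_const_lt (hβ0.trans_le hβx))
    obtain ⟨u, hxu, hu⟩ := mem_nhdsGE_iff_exists_Ico_subset.1 hgood
    have hD : Ico x u ⊆ Ici 0 := Ico_subset_Ici_self.trans hsub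
    have hintD : interior (Ico x u) ⊆ Ici 0 := interior_subset.trans hD
    have hαanti : AntitoneOn α (Ico x u) :=
      antitoneOn_of_hasDerivWithinAt_nonpos (convex_Ico x u) (hαc.mono hD)
        (fun y hy => (hα y (hintD hy)).mono hintD)
        (fun y hy => hα' y (hintD hy) (hu (interior_subset hy)).1 (hu (interior_subset hy)).2)
    have hβmono : MonotoneOn β (Ico x u) :=
      monotoneOn_of_hasDerivWithinAt_nonneg (convex_Ico x u) (hβc.mono hD)
        (fun y hy => (hβ y (hintD hy)).mono hintD)
        (fun y hy => hβ' y (hintD hy) (hu (interior_subset hy)).1 (hu (interior_subset hy)).2)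
    filter_upwards [Ioo_mem_nhdsGT hxu] with y hy
    have hxI : x ∈ Ico x u := ⟨le_rfl, hxu⟩
    have hyI : y ∈ Ico x u := Ioo_subset_Ico_self hy
    exact ⟨(hαanti hxI hyI hy.1.le).trans hαx, hβx.trans (hβmono hxI hyI hy.1.le)⟩

theorem false_of_pos_of_hasDerivWithinAt_le_neg {G G' : ℝ → ℝ} {c : ℝ} (hc : 0 < c)
    (hG : ∀ t, 0 ≤ t → HasDerivWithinAt G (G' t) (Ici 0) t) (hG' : ∀ t, 0 ≤ t → G' t ≤ -c)
    (hpos : ∀ t, 0 ≤ t → 0 < G t) : False := by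
  have hanti : AntitoneOn (fun t => G t + c * t) (Ici 0) := by
    refine antitoneOn_of_hasDerivWithinAt_nonpos (f' := fun t => G' t + c * 1) (convex_Ici 0)
      (fun t ht => ((hG t ht).add ((hasDerivWithinAt_id t _).const_mul c)).continuousWithinAt)
      (fun t ht => ?_) (fun t ht => ?_)
    · rw [interior_Ici] at ht ⊢
      exact ((hG t ht.le).add ((hasDerivWithinAt_id t _).const_mul c)).mono Ioi_subset_Ici_self
    · rw [interior_Ici] at ht
      linarith [hG' t ht.le]
  have hT : 0 ≤ G 0 / c := (div_pos (hpos 0 le_rfl) hc).le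
  have := hanti self_mem_Ici hT hT
  simp only [mul_zero, add_zero, mul_div_cancel₀ _ hc.ne'] at this
  linarith [hpos _ hT]

theorem false_of_riccati_system {α β : ℝ → ℝ} {κ : ℝ} (hκ : 0 < κ)
    (h : ∀ t, 0 ≤ t → (∃ a, HasDerivWithinAt α a (Ici 0) t ∧ a ≤ κ * (α t * β t)) ∧
      ∃ b, HasDerivWithinAt β b (Ici 0) t ∧ -(κ * (α t * β t)) ≤ b)
    (hα0 : α 0 < 0) (hβ0 : 0 < β 0) : False := by
  choose! α' hα hα' using fun t ht => (h t ht).1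
  choose! β' hβ hβ' using fun t ht => (h t ht).2
  have hsign : ∀ t, 0 ≤ t → α t < 0 ∧ 0 < β t := fun t ht =>
    have hκαβ {s} (ha : α s < 0) (hb : 0 < β s) : κ * (α s * β s) < 0 :=
      mul_neg_of_pos_of_neg hκ (mul_neg_of_neg_of_pos ha hb)
    have h := quadrant_forward_invariant hα hβ
      (fun s hs ha hb => (hα' s hs).trans (hκαβ ha hb).le)
      (fun s hs ha hb => (neg_nonneg.2 (hκαβ ha hb).le).trans (hβ' s hs)) hα0 hβ0 ht
    ⟨h.1.trans_lt hα0, hβ0.trans_le h.2⟩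
  -- `1/β - 1/α` stays positive but decreases at rate at least `2κ`
  refine false_of_pos_of_hasDerivWithinAt_le_neg (G := fun t => (β t)⁻¹ - (α t)⁻¹)
    (mul_pos two_pos hκ) (fun t ht => ((hβ t ht).inv (hsign t ht).2.ne').sub
      ((hα t ht).inv (hsign t ht).1.ne)) (fun t ht => ?_)
    (fun t ht => sub_pos.2 ((inv_lt_zero.2 (hsign t ht).1).trans (inv_pos.2 (hsign t ht).2)))
  obtain ⟨ha, hb⟩ := hsign t ht
  have hβ'_div : -(β' t) / β t ^ 2 ≤ κ * (α t * β t) / β t ^ 2 :=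
    div_le_div_of_nonneg_right (by linarith [hβ' t ht]) (sq_nonneg _)
  have hα'_div : α' t / α t ^ 2 ≤ κ * (α t * β t) / α t ^ 2 :=
    div_le_div_of_nonneg_right (hα' t ht) (sq_nonneg _)
  have hsum : κ * (α t * β t) / β t ^ 2 + κ * (α t * β t) / α t ^ 2 + 2 * κ
      = κ * ((α t + β t) ^ 2 / (α t * β t)) := by
    field_simp [ha.ne, hb.ne']
    ring
  have hsum_nonpos : κ * ((α t + β t) ^ 2 / (α t * β t)) ≤ 0 :=
    mul_nonpos_of_nonneg_of_nonpos hκ.le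
      (div_nonpos_of_nonneg_of_nonpos (sq_nonneg _) (mul_neg_of_neg_of_pos ha hb).le)
  rw [neg_div (α t ^ 2)]
  linarith

/-- **Blow-up theorem (Theorem 1.3) for classical solutions.** For `d ≥ 1` there is no
global classical solution `v` of the reduced equation
`∂ₜv + d v ∂ₓv = -∂ₓ (p_d ∗ (d v² + (d²/2)(∂ₓv)²))` on `[0,∞) × ℝ` with
nonincreasing energy, decay at spatial infinity, and a global characteristic through
`x₀`, whenever the initial slope satisfies `∂ₓv(0,x₀) < -(1/√d)|v(0,x₀)|`. -/
theorem blow_up (d : ℝ) (hd : 1 ≤ d) (x₀ : ℝ) :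
    ¬ ∃ (v : ℝ → ℝ → ℝ) (q : ℝ → ℝ),
      -- (a) regularity: v, ∂ₓv, ∂ₓ²v, ∂ₜv, ∂ₜ∂ₓv exist and are continuous on [0,∞) × ℝ
      (∀ t : ℝ, 0 ≤ t → ∀ x : ℝ, DifferentiableAt ℝ (fun s => v s x) t) ∧
      (∀ t : ℝ, 0 ≤ t → ∀ x : ℝ, DifferentiableAt ℝ (v t) x) ∧
      (∀ t : ℝ, 0 ≤ t → ∀ x : ℝ, DifferentiableAt ℝ (deriv (v t)) x) ∧
      (∀ t : ℝ, 0 ≤ t → ∀ x : ℝ, DifferentiableAt ℝ (fun s => deriv (v s) x) t) ∧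
      ContinuousOn (fun p : ℝ × ℝ => v p.1 p.2) (Set.Ici 0 ×ˢ Set.univ) ∧
      ContinuousOn (fun p : ℝ × ℝ => deriv (v p.1) p.2) (Set.Ici 0 ×ˢ Set.univ) ∧
      ContinuousOn (fun p : ℝ × ℝ => deriv (deriv (v p.1)) p.2)
        (Set.Ici 0 ×ˢ Set.univ) ∧
      ContinuousOn (fun p : ℝ × ℝ => deriv (fun s => v s p.2) p.1)
        (Set.Ici 0 ×ˢ Set.univ) ∧
      ContinuousOn (fun p : ℝ × ℝ => deriv (fun s => deriv (v s) p.2) p.1)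
        (Set.Ici 0 ×ˢ Set.univ) ∧
      -- mixed partials commute: ∂ₜ∂ₓv = ∂ₓ∂ₜv
      (∀ t : ℝ, 0 ≤ t → ∀ x : ℝ, deriv (fun s => deriv (v s) x) t
        = deriv (fun y => deriv (fun s => v s y) t) x) ∧
      -- (b) square-integrability, spatial decay, and nonincreasing energy
      (∀ t : ℝ, 0 ≤ t → MeasureTheory.Integrable (fun ξ => (v t ξ) ^ 2)) ∧
      (∀ t : ℝ, 0 ≤ t → MeasureTheory.Integrable (fun ξ => (deriv (v t) ξ) ^ 2)) ∧
      (∀ t : ℝ, 0 ≤ t → Filter.Tendsto (v t) Filter.atTop (nhds 0)) ∧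
      (∀ t : ℝ, 0 ≤ t → Filter.Tendsto (v t) Filter.atBot (nhds 0)) ∧
      (∀ t : ℝ, 0 ≤ t →
        (∫ ξ : ℝ, ((v t ξ) ^ 2 + d * (deriv (v t) ξ) ^ 2))
          ≤ ∫ ξ : ℝ, ((v 0 ξ) ^ 2 + d * (deriv (v 0) ξ) ^ 2)) ∧
      -- (c) the reduced equation with P = p_d ∗ (d v² + (d²/2)(∂ₓv)²)
      (∀ t : ℝ, 0 ≤ t → ∀ x : ℝ,
        deriv (fun s => v s x) t + d * v t x * deriv (v t) x
          = -deriv (fun y => ∫ ξ : ℝ,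
              pd d (y - ξ) * (d * (v t ξ) ^ 2 + d ^ 2 / 2 * (deriv (v t) ξ) ^ 2)) x) ∧
      -- (d) a global characteristic through x₀
      q 0 = x₀ ∧
      (∀ t : ℝ, 0 ≤ t → HasDerivAt q (d * v t (q t)) t) ∧
      -- (e) the initial slope condition
      deriv (v 0) x₀ < -(1 / Real.sqrt d) * |v 0 x₀| := by
  rintro ⟨v, q, hvt, hvx, hvxx, hvtx, -, -, -, hcvt, hcvtx, hmix, hL2, hL2x, htop, hbot, -, heq,
    hq0, hq, hslope⟩
  obtain ⟨r, hr, rfl⟩ : ∃ r, 0 < r ∧ d = r ^ 2 :=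
    ⟨√d, sqrt_pos.2 (by linarith), (sq_sqrt (by linarith)).symm⟩
  rw [sqrt_sq hr.le] at hslope
  have hslope' : r * deriv (v 0) x₀ < -|v 0 x₀| :=
    calc r * deriv (v 0) x₀ < r * (-(1 / r) * |v 0 x₀|) := mul_lt_mul_of_pos_left hslope hr
      _ = -|v 0 x₀| := by field_simp
  refine false_of_riccati_system (α := fun s => v s (q s) + r * deriv (v s) (q s))
    (β := fun s => v s (q s) - r * deriv (v s) (q s)) (half_pos hr) (fun t ht => ?_) ?_ ?_
  · obtain ⟨P, Q, hPdef, hP, hQ, hm, hp⟩ := exists_pd_conv_potential hr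
      (fun x => (hvx t ht x).hasDerivAt)
      (continuous_iff_continuousAt.2 fun x => (hvxx t ht x).continuousAt)
      (hL2 t ht) (hL2x t ht) (htop t ht) (hbot t ht)
    obtain ⟨hu, hy⟩ := hasDerivWithinAt_along_characteristic hr ht hvt hvtx (hvx t ht _)
      (hvxx t ht _) hcvt hcvtx (hmix t ht _) hP (hQ _) (hPdef ▸ heq t ht) (hq t ht)
    exact riemann_invariants_riccati hr hu hy (hm _) (hp _)
  · rw [hq0]
    linarith [le_abs_self (v 0 x₀)]
  · rw [hq0]
    linarith [neg_abs_le (v 0 x₀)]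
end
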